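/- arXiv:1006.2952 — 2 statements merged into one kernel-verified Lean document; each statement's English description precedes it below -/
import Mathlib

section
/- Let R be a commutative Noetherian ring and let n, r be positive integers with ringKrullDim R ≤ n − 3. Let σ be an r × (n+r) matrix over R admitting a right inverse, i.e., there exists an (n+r) × r matrix τ over R with σ · τ equal to the r × r identity matrix. Then σ can be completed to an elementary matrix: there exists an invertible (n+r) × (n+r) matrix Δ lying in the subgroup E_{n+r}(R) of GL_{n+r}(R) generated by elementary matrices, such that the first r rows of Δ are exactly the rows of σ. -/
/-- The subgroup `E_m(R)` of `GL_m(R)` generated by the elementary matrices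
`1 + a • E_{ij}` (`i ≠ j`). -/
def elementarySubgroup (R : Type*) [CommRing R] (m : ℕ) :
    Subgroup (Matrix.GeneralLinearGroup (Fin m) R) :=
  Subgroup.closure { M | ∃ (i j : Fin m) (a : R), i ≠ j ∧
    (M : Matrix (Fin m) (Fin m) R) = 1 + Matrix.single i j a }

/-!
Bass: over a Noetherian ring of Krull dimension `d`, a unimodular row `(a, v₁, …, v_m)` with
`m > d` can be shortened, i.e. `(v₁ + t₁ a, …, v_m + t_m a)` is unimodular for suitable `tᵢ`.
The `tᵢ` are chosen one at a time by prime avoidance, so that every prime containing the first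
`k` new entries but not `a` has height at least `k`; for `k = m > d` no such prime is left.

With this stable range, a right-invertible `r × (n + r)` matrix `σ` (`d < n`) is brought to
`(1 | 0)` by elementary column operations: its first row is unimodular and becomes `e₀`, the
other rows are handled by induction on `r` inside `diag(1, E_{n+r-1})`, and the first column is
then cleared. So `σ g = (1 | 0)` with `g ∈ E_{n+r}`, and `σ` is the top of `g⁻¹`.
-/

open Finset in
theorem Ideal.exists_add_mul_forall_notMem {R : Type*} [CommRing R] (a b : R)
    (S : Finset (Ideal R)) (hS : ∀ P ∈ S, P.IsPrime) (hb : ∀ P ∈ S, b ∉ P) :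
    ∃ t, ∀ P ∈ S, a + t * b ∉ P := by
  classical
  induction S using Finset.strongInduction with
  | H S ih =>
  rcases S.eq_empty_or_nonempty with rfl | hne
  · simp
  obtain ⟨P, hPS, hPmin⟩ := S.exists_minimal hne
  obtain ⟨t, ht⟩ := ih (S.erase P) (erase_ssubset hPS)
    (fun Q hQ => hS Q (mem_of_mem_erase hQ)) (fun Q hQ => hb Q (mem_of_mem_erase hQ))
  by_cases htP : a + t * b ∉ P
  · refine ⟨t, fun Q hQ => ?_⟩
    by_cases hQP : Q = P
    · exact hQP ▸ htP
    · exact ht Q (mem_erase.2 ⟨hQP, hQ⟩)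
  -- no other `Q ∈ S` lies below the minimal `P`, so some `y` lies in all of them but not in `P`
  have hprod : ¬ ∏ Q ∈ S.erase P, Q ≤ P := fun hle => by
    obtain ⟨Q, hQ, hQP⟩ := (hS P hPS).prod_le.1 hle
    exact (mem_erase.1 hQ).1 (le_antisymm hQP (hPmin (mem_of_mem_erase hQ) hQP))
  obtain ⟨y, hy, hyP⟩ := SetLike.not_le_iff_exists.1 hprod
  refine ⟨t + y, fun Q hQ hmem => ?_⟩
  rw [add_mul, ← add_assoc] at hmem
  by_cases hQP : Q = P
  · subst hQP
    have hP := hS Q hQ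
    exact (hP.mem_or_mem ((Q.add_mem_iff_right (not_not.1 htP)).1 hmem)).elim hyP (hb Q hQ)
  · have hQ' : Q ∈ S.erase P := mem_erase.2 ⟨hQP, hQ⟩
    have hyQ : y ∈ Q := Ideal.prod_le_inf.trans (Finset.inf_le hQ') hy
    exact ht Q hQ' ((Q.add_mem_iff_left (Q.mul_mem_right b hyQ)).1 hmem)

theorem exists_add_mul_forall_le_height {R : Type*} [CommRing R] [IsNoetherianRing R] (a : R) :
    ∀ {m : ℕ} (u : Fin m → R), ∃ t : Fin m → R, ∀ P : PrimeSpectrum R, a ∉ P.asIdeal →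
      (∀ i, u i + t i * a ∈ P.asIdeal) → (m : ℕ∞) ≤ Order.height P
  | 0, _ => ⟨0, fun _ _ _ => by simp⟩
  | m + 1, u => by
    classical
    obtain ⟨t, ht⟩ := exists_add_mul_forall_le_height a (Fin.tail u)
    set I := Ideal.span (Set.range fun i => Fin.tail u i + t i * a)
    let S := I.finite_minimalPrimes_of_isNoetherianRing.toFinset.filter (a ∉ ·)
    obtain ⟨t₀, ht₀⟩ := Ideal.exists_add_mul_forall_notMem (u 0) a S
      (fun Q hQ => (Set.Finite.mem_toFinset _).1 (Finset.mem_filter.1 hQ).1 |>.isPrime)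
      (fun Q hQ => (Finset.mem_filter.1 hQ).2)
    refine ⟨Fin.cons t₀ t, fun P haP hP => ?_⟩
    have hIP : I ≤ P.asIdeal := Ideal.span_le.2 <| Set.range_subset_iff.2 fun i => hP i.succ
    obtain ⟨Q, hQ, hQP⟩ := Ideal.exists_minimalPrimes_le hIP
    let Q' : PrimeSpectrum R := ⟨Q, hQ.isPrime⟩
    have haQ : a ∉ Q := fun h => haP (hQP h)
    have hmQ : (m : ℕ∞) ≤ Order.height Q' :=
      ht Q' haQ fun i => hQ.le (Ideal.subset_span ⟨i, rfl⟩)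
    -- `Q` is one of the avoided primes, while `P` contains `u 0 + t₀ * a`
    have hQP' : Q' < P := lt_of_le_of_ne hQP fun h => ht₀ Q
      (Finset.mem_filter.2 ⟨(Set.Finite.mem_toFinset _).2 hQ, haQ⟩) (by simpa [← h] using hP 0)
    push_cast
    exact (add_le_add_left hmQ 1).trans (Order.height_add_one_le hQP')

/-- Bass's stable range condition `sr(R) ≤ n`, required directly of unimodular rows of every
length `m + 1 ≥ n + 1`: adding suitable multiples of the first entry to the others makes them
unimodular. -/
def StableRangeLE (R : Type*) [CommRing R] (n : ℕ) : Prop :=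
  ∀ m, n ≤ m → ∀ v : Fin (m + 1) → R, Ideal.span (Set.range v) = ⊤ →
    ∃ t : Fin m → R, Ideal.span (Set.range fun i => v i.succ + t i * v 0) = ⊤

theorem stableRangeLE_of_ringKrullDim_lt {R : Type*} [CommRing R] [IsNoetherianRing R] {n : ℕ}
    (hdim : ringKrullDim R < n) : StableRangeLE R n := by
  intro m hm v hv
  obtain ⟨t, ht⟩ := exists_add_mul_forall_le_height (v 0) (Fin.tail v)
  refine ⟨t, by_contra fun hne => ?_⟩
  obtain ⟨M, hM, hle⟩ := Ideal.exists_le_maximal _ hne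
  have hw : ∀ i, v i.succ + t i * v 0 ∈ M := fun i => hle (Ideal.subset_span ⟨i, rfl⟩)
  have hv0 : v 0 ∈ M := by
    by_contra hv0
    have hmM := ht ⟨M, hM.isPrime⟩ hv0 hw
    have : (m : WithBot ℕ∞) < m := calc
      (m : WithBot ℕ∞) ≤ Order.height (⟨M, hM.isPrime⟩ : PrimeSpectrum R) := by exact_mod_cast hmM
      _ ≤ ringKrullDim R := Order.height_le_krullDim _
      _ < n := hdim
      _ ≤ m := by exact_mod_cast hm
    exact this.false
  have hvM : Ideal.span (Set.range v) ≤ M := Ideal.span_le.2 <| Set.range_subset_iff.2 <|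
    Fin.cases hv0 fun i => by simpa using M.sub_mem (hw i) (M.mul_mem_left (t i) hv0)
  exact hM.ne_top (top_le_iff.1 (hv ▸ hvM))

section ElementaryColumnOperations

open Matrix

variable {R : Type*} [CommRing R] {r m : ℕ}

theorem exists_mem_elementarySubgroup_val_eq_transvection {i j : Fin m} (hij : i ≠ j) (c : R) :
    ∃ g ∈ elementarySubgroup R m, (g : Matrix (Fin m) (Fin m) R) = transvection i j c :=
  ⟨nonsingInvUnit (transvection i j c) (by rw [det_transvection_of_ne _ _ hij]; exact isUnit_one),
    Subgroup.subset_closure ⟨i, j, c, hij, rfl⟩, rfl⟩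

def ElemColReduces (σ τ : Matrix (Fin r) (Fin m) R) : Prop :=
  ∃ g ∈ elementarySubgroup R m, σ * (g : Matrix (Fin m) (Fin m) R) = τ

namespace ElemColReduces

theorem refl (σ : Matrix (Fin r) (Fin m) R) : ElemColReduces σ σ :=
  ⟨1, one_mem _, by simp⟩

theorem trans {σ τ ρ : Matrix (Fin r) (Fin m) R} (h₁ : ElemColReduces σ τ)
    (h₂ : ElemColReduces τ ρ) : ElemColReduces σ ρ := by
  obtain ⟨g₁, hg₁, rfl⟩ := h₁
  obtain ⟨g₂, hg₂, rfl⟩ := h₂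
  exact ⟨g₁ * g₂, mul_mem hg₁ hg₂, by rw [Units.val_mul, Matrix.mul_assoc]⟩

theorem mul_transvection (σ : Matrix (Fin r) (Fin m) R) {i j : Fin m} (hij : i ≠ j) (c : R) :
    ElemColReduces σ (σ * transvection i j c) := by
  obtain ⟨g, hg, hgv⟩ := exists_mem_elementarySubgroup_val_eq_transvection hij c
  exact ⟨g, hg, by rw [hgv]⟩

theorem exists_mul_eq_one {σ σ' : Matrix (Fin r) (Fin m) R} (h : ElemColReduces σ σ')
    (hσ : ∃ τ : Matrix (Fin m) (Fin r) R, σ * τ = 1) :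
    ∃ τ' : Matrix (Fin m) (Fin r) R, σ' * τ' = 1 := by
  obtain ⟨g, -, rfl⟩ := h
  obtain ⟨τ, hτ⟩ := hσ
  exact ⟨((g⁻¹ : GL (Fin m) R) : Matrix (Fin m) (Fin m) R) * τ, by
    rw [Matrix.mul_assoc, ← Matrix.mul_assoc (g : Matrix (Fin m) (Fin m) R), Units.mul_inv,
      Matrix.one_mul, hτ]⟩

theorem add_mul_col_zero (σ : Matrix (Fin r) (Fin (m + 1)) R) (t : Fin m → R) :
    ElemColReduces σ (of fun i => Fin.cons (σ i 0) fun j => σ i j.succ + t j * σ i 0) := by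
  classical
  suffices ∀ s : Finset (Fin m), ElemColReduces σ (of fun i => Fin.cons (σ i 0) fun j =>
      if j ∈ s then σ i j.succ + t j * σ i 0 else σ i j.succ) by
    simpa using this Finset.univ
  intro s
  induction s using Finset.induction with
  | empty => convert refl σ; ext i j; cases j using Fin.cases <;> simp
  | insert q s hq ih =>
    refine ih.trans ?_
    convert mul_transvection _ (Fin.succ_ne_zero q).symm (t q) using 1
    ext i j
    cases j using Fin.cases with
    | zero => simp [(Fin.succ_ne_zero q).symm]
    | succ j =>
      by_cases hjq : j = q
      · subst hjq; simp [hq]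
      · simp [hjq, Fin.succ_inj]

theorem col_zero_add_sum_mul (σ : Matrix (Fin r) (Fin (m + 1)) R) (f : Fin m → R) :
    ElemColReduces σ
      (of fun i => Fin.cons (σ i 0 + ∑ j, f j * σ i j.succ) fun j => σ i j.succ) := by
  classical
  suffices ∀ s : Finset (Fin m), ElemColReduces σ
      (of fun i => Fin.cons (σ i 0 + ∑ j ∈ s, f j * σ i j.succ) fun j => σ i j.succ) from
    this Finset.univ
  intro s
  induction s using Finset.induction with
  | empty => convert refl σ; ext i j; cases j using Fin.cases <;> simp
  | insert q s hq ih =>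
    refine ih.trans ?_
    convert mul_transvection _ (Fin.succ_ne_zero q) (f q) using 1
    ext i j
    cases j using Fin.cases with
    | zero => simp [Finset.sum_insert hq]; ring
    | succ j => simp [Fin.succ_ne_zero]

end ElemColReduces

theorem StableRangeLE.exists_elemColReduces_row_eq {n : ℕ} (hR : StableRangeLE R n)
    (hm : n ≤ m) (σ : Matrix (Fin r) (Fin (m + 1)) R) (i₀ : Fin r)
    (hu : Ideal.span (Set.range (σ i₀)) = ⊤) :
    ∃ τ, ElemColReduces σ τ ∧ τ i₀ = Fin.cons 1 0 := by
  obtain ⟨t, ht⟩ := hR m hm (σ i₀) hu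
  obtain ⟨c, hc⟩ : ∃ c : Fin m → R, ∑ j, c j * (σ i₀ j.succ + t j * σ i₀ 0) = 1 :=
    Ideal.mem_span_range_iff_exists_fun.1 (ht ▸ Submodule.mem_top)
  have hfirst : σ i₀ 0 + ∑ j, (1 - σ i₀ 0) * c j * (σ i₀ j.succ + t j * σ i₀ 0) = 1 := by
    simp_rw [mul_assoc, ← Finset.mul_sum, hc]; ring
  -- make the tail unimodular, use it to turn the first entry into `1`, then clear the tail
  refine ⟨_, ((ElemColReduces.add_mul_col_zero σ t).trans
    (ElemColReduces.col_zero_add_sum_mul _ fun j => (1 - σ i₀ 0) * c j)).trans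
    (ElemColReduces.add_mul_col_zero _ fun j => -(σ i₀ j.succ + t j * σ i₀ 0)), ?_⟩
  ext j
  cases j using Fin.cases with
  | zero => simpa using hfirst
  | succ j => simp only [of_apply, Fin.cons_succ, Fin.cons_zero, hfirst]; simp

theorem Matrix.span_range_row_eq_top_of_mul_eq_one {ι κ : Type*} [Fintype κ] [DecidableEq ι]
    {σ : Matrix ι κ R} {τ : Matrix κ ι R} (h : σ * τ = 1) (i : ι) :
    Ideal.span (Set.range (σ i)) = ⊤ := by
  rw [Ideal.eq_top_iff_one, ← one_apply_eq (α := R) i, ← h, mul_apply]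
  exact Ideal.sum_mem _ fun k _ => Ideal.mul_mem_right _ _ (Ideal.subset_span ⟨k, rfl⟩)

theorem Matrix.submatrix_succ_mul_submatrix_succ_eq_one {σ : Matrix (Fin (r + 1)) (Fin (m + 1)) R}
    {τ : Matrix (Fin (m + 1)) (Fin (r + 1)) R} (h : σ * τ = 1) (h₀ : σ 0 = Fin.cons 1 0) :
    σ.submatrix Fin.succ Fin.succ * τ.submatrix Fin.succ Fin.succ = 1 := by
  have hτ₀ : ∀ j : Fin r, τ 0 j.succ = 0 := fun j => by
    simpa [mul_apply, h₀, Fin.sum_univ_succ, one_apply, (Fin.succ_ne_zero _).symm]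
      using congr_fun₂ h 0 j.succ
  ext i j
  simpa [mul_apply, Fin.sum_univ_succ, hτ₀, one_apply] using congr_fun₂ h i.succ j.succ

def Matrix.diagOneHom : Matrix (Fin m) (Fin m) R →* Matrix (Fin (m + 1)) (Fin (m + 1)) R where
  toFun M := of (Fin.cons (Fin.cons 1 0) fun i => Fin.cons 0 (M i))
  map_one' := by
    ext i j
    cases i using Fin.cases <;> cases j using Fin.cases <;>
      simp [one_apply, Fin.succ_ne_zero, (Fin.succ_ne_zero _).symm]
  map_mul' M N := by
    ext i j
    cases i using Fin.cases <;> cases j using Fin.cases <;> simp [mul_apply, Fin.sum_univ_succ]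

theorem Matrix.diagOneHom_one_add_single (i j : Fin m) (c : R) :
    diagOneHom (1 + single i j c) = 1 + single i.succ j.succ c := by
  ext k l
  cases k using Fin.cases <;> cases l using Fin.cases <;>
    simp [diagOneHom, one_apply, single_apply, Fin.succ_ne_zero, (Fin.succ_ne_zero _).symm]

theorem Matrix.diagOneHom_mem_elementarySubgroup {g : GL (Fin m) R}
    (hg : g ∈ elementarySubgroup R m) :
    Units.map diagOneHom g ∈ elementarySubgroup R (m + 1) := by
  refine (Subgroup.closure_le ((elementarySubgroup R (m + 1)).comap (Units.map diagOneHom))).2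
    ?_ hg
  rintro _ ⟨i, j, c, hij, hg⟩
  exact Subgroup.subset_closure ⟨i.succ, j.succ, c, Fin.succ_inj.not.2 hij, by
    simp [hg, diagOneHom_one_add_single]⟩

theorem Matrix.mul_diagOneHom_apply_zero {k : Type*} (A : Matrix k (Fin (m + 1)) R)
    (M : Matrix (Fin m) (Fin m) R) (i : k) : (A * diagOneHom M) i 0 = A i 0 := by
  simp [diagOneHom, mul_apply, Fin.sum_univ_succ]

theorem Matrix.mul_diagOneHom_apply_succ {k : Type*} (A : Matrix k (Fin (m + 1)) R)
    (M : Matrix (Fin m) (Fin m) R) (i : k) (j : Fin m) :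
    (A * diagOneHom M) i j.succ = ∑ k, A i k.succ * M k j := by
  simp [diagOneHom, mul_apply, Fin.sum_univ_succ]

def firstUnitRows (R : Type*) [CommRing R] (n r : ℕ) : Matrix (Fin r) (Fin (n + r)) R :=
  (1 : Matrix (Fin (n + r)) (Fin (n + r)) R).submatrix (Fin.castLE (Nat.le_add_left r n)) id

theorem ElemColReduces.firstUnitRows_succ {n : ℕ} (σ : Matrix (Fin (r + 1)) (Fin (n + r + 1)) R)
    (h₀ : σ 0 = Fin.cons 1 0) (h : σ.submatrix Fin.succ Fin.succ = firstUnitRows R n r) :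
    ElemColReduces σ (firstUnitRows R n (r + 1)) := by
  have hsucc : ∀ i j, σ i.succ j.succ = firstUnitRows R n r i j := fun i j => congr_fun₂ h i j
  -- subtracting `σ (k + 1) 0` times column `k + 1` clears the first column below row `0`
  have key : firstUnitRows R n (r + 1) = of fun i => Fin.cons
      (σ i 0 + ∑ j, (-∑ k, σ k.succ 0 * firstUnitRows R n r k j) * σ i j.succ)
      fun j => σ i j.succ := by
    ext i j
    cases i using Fin.cases <;> cases j using Fin.cases <;>
      simp [h₀, hsucc, firstUnitRows, one_apply, (Fin.succ_ne_zero _).symm]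
  rw [key]
  exact col_zero_add_sum_mul σ _

theorem StableRangeLE.elemColReduces_firstUnitRows {n : ℕ} (hR : StableRangeLE R n) :
    ∀ {r : ℕ} (σ : Matrix (Fin r) (Fin (n + r)) R),
      (∃ τ : Matrix (Fin (n + r)) (Fin r) R, σ * τ = 1) →
      ElemColReduces σ (firstUnitRows R n r)
  | 0, σ, _ => by convert ElemColReduces.refl σ using 1; ext i; exact i.elim0
  | r + 1, σ, hσ => by
    obtain ⟨τ, hτ⟩ := hσ
    obtain ⟨σ₁, h₁, hrow⟩ := hR.exists_elemColReduces_row_eq (Nat.le_add_right n r) σ 0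
      (span_range_row_eq_top_of_mul_eq_one hτ 0)
    obtain ⟨τ₁, hτ₁⟩ := h₁.exists_mul_eq_one ⟨τ, hτ⟩
    obtain ⟨g, hg, hσ₁g⟩ := hR.elemColReduces_firstUnitRows (σ₁.submatrix Fin.succ Fin.succ)
      ⟨_, submatrix_succ_mul_submatrix_succ_eq_one hτ₁ hrow⟩
    refine (h₁.trans ⟨_, diagOneHom_mem_elementarySubgroup hg, rfl⟩).trans
      (ElemColReduces.firstUnitRows_succ _ ?_ ?_)
    · ext j
      cases j using Fin.cases <;>
        simp [mul_diagOneHom_apply_zero, mul_diagOneHom_apply_succ, hrow]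
    · ext i j
      rw [← hσ₁g, submatrix_apply]
      exact mul_diagOneHom_apply_succ σ₁ (g : Matrix (Fin (n + r)) (Fin (n + r)) R) i.succ j

end ElementaryColumnOperations

theorem WithBot.lt_of_add_natCast_le {x : WithBot ℕ∞} {k n : ℕ} (hk : 0 < k)
    (h : x + k ≤ n) : x < n := by
  induction x using WithBot.recBotCoe with
  | bot => exact WithBot.bot_lt_coe _
  | coe d =>
    induction d using ENat.recTopCoe with
    | top =>
      have : ((⊤ + k : ℕ∞) : WithBot ℕ∞) ≤ ((n : ℕ∞) : WithBot ℕ∞) := h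
      simp only [top_add, WithBot.coe_le_coe, top_le_iff] at this
      exact absurd this (ENat.natCast_ne_top n)
    | coe d =>
      have : d + k ≤ n := by exact_mod_cast h
      exact_mod_cast (by omega : d < n)

theorem stmt4_general {R : Type*} [CommRing R] [IsNoetherianRing R] (n r : ℕ)
    (hdim : ringKrullDim R + ((3 : ℕ) : WithBot ℕ∞) ≤ ((n : ℕ) : WithBot ℕ∞))
    (σ : Matrix (Fin r) (Fin (n + r)) R)
    (hσ : ∃ τ : Matrix (Fin (n + r)) (Fin r) R, σ * τ = 1) :
    ∃ Δ ∈ elementarySubgroup R (n + r),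
      ∀ (i : Fin r) (j : Fin (n + r)),
        (Δ : Matrix (Fin (n + r)) (Fin (n + r)) R) (Fin.castLE (Nat.le_add_left r n) i) j
          = σ i j := by
  have hR : StableRangeLE R n :=
    stableRangeLE_of_ringKrullDim_lt (WithBot.lt_of_add_natCast_le (by norm_num) hdim)
  obtain ⟨g, hg, hσg⟩ := hR.elemColReduces_firstUnitRows σ hσ
  refine ⟨g⁻¹, inv_mem hg, fun i j => ?_⟩
  have hσ' : σ = firstUnitRows R n r *
      ((g⁻¹ : GL (Fin (n + r)) R) : Matrix (Fin (n + r)) (Fin (n + r)) R) := by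
    rw [← hσg, Matrix.mul_assoc, Units.mul_inv, Matrix.mul_one]
  simp [hσ', firstUnitRows, Matrix.mul_apply, Matrix.one_apply]

theorem stmt4 {R : Type*} [CommRing R] [IsNoetherianRing R] (n r : ℕ)
    (hn : 0 < n) (hr : 0 < r)
    (hdim : ringKrullDim R + ((3 : ℕ) : WithBot ℕ∞) ≤ ((n : ℕ) : WithBot ℕ∞))
    (σ : Matrix (Fin r) (Fin (n + r)) R)
    (hσ : ∃ τ : Matrix (Fin (n + r)) (Fin r) R, σ * τ = 1) :
    ∃ Δ ∈ elementarySubgroup R (n + r),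
      ∀ (i : Fin r) (j : Fin (n + r)),
        (Δ : Matrix (Fin (n + r)) (Fin (n + r)) R) (Fin.castLE (Nat.le_add_left r n) i) j
          = σ i j :=
  stmt4_general n r hdim σ hσ
end

section
/- Let A be a commutative ring and let I, K, J, N be ideals of A such that I ⊆ J, N ⊆ J, J ⊆ N + I + J², and I + K = A. Then J = N + (I ∩ K) + J². -/
theorem Ideal.eq_sq_sup_inf_of_sup_eq_top {A : Type*} [CommRing A] {I K : Ideal A}
    (hIK : I ⊔ K = ⊤) : I = I ^ 2 ⊔ I ⊓ K := by
  calc I = I * (I ⊔ K) := by rw [hIK, Ideal.mul_top]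
    _ = I ^ 2 ⊔ I ⊓ K := by rw [Ideal.mul_sup, sq, Ideal.mul_eq_inf_of_coprime hIK]

theorem stmt7 {A : Type*} [CommRing A] (I K J N : Ideal A)
    (hIJ : I ≤ J) (hNJ : N ≤ J) (hJ : J ≤ N + I + J ^ 2) (hIK : I + K = ⊤) :
    J = N + (I ⊓ K) + J ^ 2 := by
  simp only [Submodule.add_eq_sup] at hJ hIK ⊢
  have hI : I ≤ I ⊓ K ⊔ J ^ 2 := calc
    I = I ^ 2 ⊔ I ⊓ K := Ideal.eq_sq_sup_inf_of_sup_eq_top hIK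
    _ ≤ I ⊓ K ⊔ J ^ 2 := by rw [sup_comm]; gcongr
  have hJsq : J ^ 2 ≤ J := Ideal.pow_le_self two_ne_zero
  refine le_antisymm (hJ.trans ?_) (sup_le (sup_le hNJ (inf_le_left.trans hIJ)) hJsq)
  calc N ⊔ I ⊔ J ^ 2 ≤ N ⊔ (I ⊓ K ⊔ J ^ 2) ⊔ J ^ 2 := by gcongr
    _ = N ⊔ I ⊓ K ⊔ J ^ 2 := by rw [← sup_assoc, sup_assoc _ (J ^ 2), sup_idem]
end
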